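/- arXiv:2207.13621 — 5 statements merged into one kernel-verified Lean document; each statement's English description precedes it below -/
import Mathlib

section
/- Let A be a commutative Noetherian ring of Krull dimension d and J ⊆ A an ideal. Then the double ring D = {(a,b) ∈ A × A : a − b ∈ J} is a commutative Noetherian ring of Krull dimension d. -/
/-- The double ring `D = {(a, b) ∈ A × A : a − b ∈ J}` relative to the ideal `J`,
as a subring of `A × A` (with componentwise operations). -/
def doubleRing {A : Type*} [CommRing A] (J : Ideal A) : Subring (A × A) where
  carrier := {p : A × A | p.1 - p.2 ∈ J}
  zero_mem' := by simp
  one_mem' := by simp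
  add_mem' := by
    intro p q hp hq
    simpa [add_sub_add_comm] using J.add_mem hp hq
  neg_mem' := by
    intro p hp
    have : -p.1 + p.2 = -(p.1 - p.2) := by ring
    simpa [this] using J.neg_mem hp
  mul_mem' := by
    intro p q hp hq
    have h : p.1 * q.1 - p.2 * q.2 = p.1 * (q.1 - q.2) + (p.1 - p.2) * q.2 := by ring
    simpa [h, Set.mem_setOf_eq] using J.add_mem (J.mul_mem_left _ hq) (J.mul_mem_right _ hp)

namespace DoubleRingAux

variable {A : Type*} [CommRing A] (J : Ideal A)

lemma mem_doubleRing {p : A × A} : p ∈ doubleRing J ↔ p.1 - p.2 ∈ J := Iff.rfl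

/-- The double ring as a subalgebra of `A × A`. -/
def doubleAlg : Subalgebra A (A × A) where
  carrier := {p : A × A | p.1 - p.2 ∈ J}
  add_mem' := by
    intro p q hp hq
    simpa [add_sub_add_comm] using J.add_mem hp hq
  mul_mem' := by
    intro p q hp hq
    have h : p.1 * q.1 - p.2 * q.2 = p.1 * (q.1 - q.2) + (p.1 - p.2) * q.2 := by ring
    simpa [h, Set.mem_setOf_eq] using J.add_mem (J.mul_mem_left _ hq) (J.mul_mem_right _ hp)
  algebraMap_mem' := by intro a; simp [Algebra.algebraMap_eq_smul_one]

def doubleEquiv : doubleRing J ≃+* doubleAlg J where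
  toFun x := ⟨x.1, x.2⟩
  invFun x := ⟨x.1, x.2⟩
  left_inv _ := rfl
  right_inv _ := rfl
  map_mul' _ _ := rfl
  map_add' _ _ := rfl

lemma noeth [IsNoetherianRing A] : IsNoetherianRing (doubleRing J) := by
  have h0 : IsNoetherian A A := isNoetherianRing_iff.mp ‹_›
  have h1 : IsNoetherian A (A × A) := inferInstance
  have h2 : IsNoetherian A (Subalgebra.toSubmodule (doubleAlg J)) := inferInstance
  have h3 : IsNoetherian A (doubleAlg J) := h2
  have h4 : IsNoetherian (doubleAlg J) (doubleAlg J) := isNoetherian_of_tower A h3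
  have h5 : IsNoetherianRing (doubleAlg J) := isNoetherianRing_iff.mpr h4
  exact isNoetherianRing_of_ringEquiv _ (doubleEquiv J).symm

/-- first projection -/
def π₁ : doubleRing J →+* A := (RingHom.fst A A).comp (doubleRing J).subtype
/-- second projection -/
def π₂ : doubleRing J →+* A := (RingHom.snd A A).comp (doubleRing J).subtype

lemma π₁_surj : Function.Surjective (π₁ J) :=
  fun a => ⟨⟨(a, a), by simp [mem_doubleRing]⟩, rfl⟩

lemma π₂_surj : Function.Surjective (π₂ J) :=
  fun a => ⟨⟨(a, a), by simp [mem_doubleRing]⟩, rfl⟩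

lemma mem_ker_π₁ {x : doubleRing J} : x ∈ RingHom.ker (π₁ J) ↔ (x : A × A).1 = 0 := by
  simp [π₁, RingHom.mem_ker]

lemma mem_ker_π₂ {x : doubleRing J} : x ∈ RingHom.ker (π₂ J) ↔ (x : A × A).2 = 0 := by
  simp [π₂, RingHom.mem_ker]

lemma ker_mul : RingHom.ker (π₁ J) * RingHom.ker (π₂ J) = ⊥ := by
  rw [eq_bot_iff, Ideal.mul_le]
  intro r hr s hs
  have h1 : (r : A × A).1 = 0 := (mem_ker_π₁ J).mp hr
  have h2 : (s : A × A).2 = 0 := (mem_ker_π₂ J).mp hs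
  have : r * s = 0 := by
    apply Subtype.ext
    show (r : A × A) * (s : A × A) = 0
    ext
    · show (r : A × A).1 * (s : A × A).1 = 0
      rw [h1, zero_mul]
    · show (r : A × A).2 * (s : A × A).2 = 0
      rw [h2, mul_zero]
  simp [this]

lemma prime_cases (P : Ideal (doubleRing J)) [hP : P.IsPrime] :
    RingHom.ker (π₁ J) ≤ P ∨ RingHom.ker (π₂ J) ≤ P :=
  hP.mul_le.mp (by rw [ker_mul]; exact bot_le)

open Ideal in
lemma map_lt_map_of_ker_le {f : doubleRing J →+* A} (hf : Function.Surjective f)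
    {P Q : Ideal (doubleRing J)} (hker : RingHom.ker f ≤ P) (h : P < Q) :
    P.map f < Q.map f := by
  refine lt_of_le_of_ne (Ideal.map_mono h.le) fun heq => h.ne ?_
  have hP : Ideal.comap f (Ideal.map f P) = P := by
    rw [Ideal.comap_map_of_surjective f hf, ← RingHom.ker_eq_comap_bot, sup_eq_left.mpr hker]
  have hQ : Ideal.comap f (Ideal.map f Q) = Q := by
    rw [Ideal.comap_map_of_surjective f hf, ← RingHom.ker_eq_comap_bot, sup_eq_left.mpr (hker.trans h.le)]
  rw [← hP, ← hQ, heq]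

/-- the mixed comparison at the crossing of the chain -/
lemma map_lt_map_mixed {P Q : Ideal (doubleRing J)}
    (hP2 : RingHom.ker (π₂ J) ≤ P) (h : P < Q) :
    P.map (π₂ J) < Q.map (π₁ J) := by
  have hJmem : ∀ j ∈ J, j ∈ Q.map (π₁ J) := by
    intro j hj
    have hz : (⟨(j, 0), by simpa [mem_doubleRing] using hj⟩ : doubleRing J) ∈ Q := by
      refine (hP2.trans h.le) ?_
      rw [mem_ker_π₂]
    exact Ideal.mem_map_of_mem _ hz
  have hle : P.map (π₂ J) ≤ Q.map (π₁ J) := by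
    rw [Ideal.map_le_iff_le_comap]
    intro x hx
    have hxJ : (x : A × A).1 - (x : A × A).2 ∈ J := x.2
    -- the diagonal element (x.2, x.2) lies in Q
    have hd : (⟨((x : A × A).2, (x : A × A).2), by simp [mem_doubleRing]⟩ :
        doubleRing J) ∈ Q := by
      have hz : (⟨((x : A × A).1 - (x : A × A).2, 0), by simpa [mem_doubleRing] using hxJ⟩ :
          doubleRing J) ∈ P := hP2 (by rw [mem_ker_π₂])
      have : (⟨((x : A × A).2, (x : A × A).2), by simp [mem_doubleRing]⟩ : doubleRing J)
          = x - ⟨((x : A × A).1 - (x : A × A).2, 0), by simpa [mem_doubleRing] using hxJ⟩ := by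
        apply Subtype.ext
        show _ = (x : A × A) - _
        ext <;> simp
      rw [this]
      exact Q.sub_mem (h.le hx) (h.le hz)
    show (π₂ J) x ∈ Q.map (π₁ J)
    have := Ideal.mem_map_of_mem (π₁ J) hd
    simpa [π₁, π₂] using this
  refine lt_of_le_of_ne hle fun heq => h.ne (le_antisymm h.le ?_)
  -- show Q ≤ P using the equality of images
  intro x hx
  have ha : (x : A × A).1 ∈ Q.map (π₁ J) := Ideal.mem_map_of_mem (π₁ J) hx
  have hb : (x : A × A).2 ∈ Q.map (π₁ J) := by
    have : (x : A × A).2 = (x : A × A).1 - ((x : A × A).1 - (x : A × A).2) := by ring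
    rw [this]
    exact Ideal.sub_mem _ ha (hJmem _ x.2)
  have hb' : (x : A × A).2 ∈ P.map (π₂ J) := by rwa [heq]
  have hcom : Ideal.comap (π₂ J) (Ideal.map (π₂ J) P) = P := by
    rw [Ideal.comap_map_of_surjective _ (π₂_surj J), ← RingHom.ker_eq_comap_bot, sup_eq_left.mpr hP2]
  rw [← hcom]
  exact hb'

open Classical in
/-- The strictly monotone map `Spec D → Spec A`. -/
noncomputable def g (P : PrimeSpectrum (doubleRing J)) : PrimeSpectrum A :=
  if h : RingHom.ker (π₁ J) ≤ P.asIdeal then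
    ⟨P.asIdeal.map (π₁ J),
      haveI := P.isPrime; Ideal.map_isPrime_of_surjective (π₁_surj J) h⟩
  else
    ⟨P.asIdeal.map (π₂ J),
      haveI := P.isPrime
      Ideal.map_isPrime_of_surjective (π₂_surj J)
        ((prime_cases J P.asIdeal).resolve_left h)⟩

lemma g_strictMono : StrictMono (g J) := by
  intro P Q h
  have hlt : P.asIdeal < Q.asIdeal := h
  show (g J P).asIdeal < (g J Q).asIdeal
  unfold g
  split_ifs with h1 h2 h2
  · exact map_lt_map_of_ker_le J (π₁_surj J) h1 hlt
  · exact absurd (h1.trans hlt.le) h2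
  · exact map_lt_map_mixed J ((prime_cases J P.asIdeal).resolve_left h1) hlt
  · exact map_lt_map_of_ker_le J (π₂_surj J)
      ((prime_cases J P.asIdeal).resolve_left h1) hlt

end DoubleRingAux

/-- Let `A` be a commutative Noetherian ring of Krull dimension `d` and `J ⊆ A` an ideal.
Then the double ring `D = {(a, b) ∈ A × A : a − b ∈ J}` is a commutative Noetherian ring
(commutativity being witnessed by the subring instance) of Krull dimension `d`. -/
theorem stmt_8 {A : Type*} [CommRing A] [IsNoetherianRing A] (d : WithBot ℕ∞)
    (hd : ringKrullDim A = d) (J : Ideal A) :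
    IsNoetherianRing (doubleRing J) ∧ ringKrullDim (doubleRing J) = d := by
  subst hd
  refine ⟨DoubleRingAux.noeth J, le_antisymm ?_
    (ringKrullDim_le_of_surjective _ (DoubleRingAux.π₁_surj J))⟩
  exact Order.krullDim_le_of_strictMono _ (DoubleRingAux.g_strictMono J)
end

section
/- Let (R, Λ, λ) be a form ring. A block upper triangular matrix A = [[α, β],[0, δ]] ∈ M_{2n}(R) is a λ-quadratic matrix if and only if α ∈ GL_n(R), δ = (α*)^{-1}, and α^{-1}β is \overline{Λ}-Hermitian. -/
open Matrix

variable {R : Type*} [Ring R] [StarRing R]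

/-- The form `ψ_n = [[0, I_n], [λ I_n, 0]]`. -/
def psiForm (lam : R) (n : ℕ) : Matrix (Fin n ⊕ Fin n) (Fin n ⊕ Fin n) R :=
  Matrix.fromBlocks 0 1 (lam • 1) 0

/-- A matrix `β` is `Λ`-Hermitian if `β = −λ β*` and all diagonal entries lie in `Λ`. -/
def IsLamHermitian (lam : R) (Λ : AddSubgroup R) {n : ℕ}
    (β : Matrix (Fin n) (Fin n) R) : Prop :=
  β = -(lam • βᴴ) ∧ ∀ i, β i i ∈ Λ

/-- A matrix `β` is `Λ̄`-Hermitian if `β = −λ̄ β*` and all diagonal entries lie in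
`Λ̄ = star '' Λ`. -/
def IsBarLamHermitian (lam : R) (Λ : AddSubgroup R) {n : ℕ}
    (β : Matrix (Fin n) (Fin n) R) : Prop :=
  β = -(star lam • βᴴ) ∧ ∀ i, β i i ∈ star '' (Λ : Set R)

/-- `α = [[a, b], [c, d]]` is a `λ`-quadratic matrix: `α` belongs to the general
quadratic group `GQ(2n, R, Λ)` (i.e. `α` is invertible and `α* ψ_n α = ψ_n`) and the
diagonal entries of `a* c` and `b* d` lie in `Λ`. -/
def IsLamQuadratic (lam : R) (Λ : AddSubgroup R) {n : ℕ}
    (α : Matrix (Fin n ⊕ Fin n) (Fin n ⊕ Fin n) R) : Prop :=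
  IsUnit α ∧ αᴴ * psiForm lam n * α = psiForm lam n ∧
    (∀ i, ((α.toBlocks₁₁)ᴴ * α.toBlocks₂₁) i i ∈ Λ) ∧
    (∀ i, ((α.toBlocks₁₂)ᴴ * α.toBlocks₂₂) i i ∈ Λ)

section aux

variable {n : ℕ}

lemma star_central {lam : R} (hlam : lam ∈ Set.center R) (y : R) :
    y * star lam = star lam * y := by
  have h := congrArg star (hlam.comm (star y))
  simpa [StarMul.star_mul] using h

/-- conjugate transpose of a central scalar smul -/
lemma smul_conjTranspose_central (lam : R) (hlam : lam ∈ Set.center R)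
    (M : Matrix (Fin n) (Fin n) R) : (lam • M)ᴴ = star lam • Mᴴ := by
  ext i j
  simp only [Matrix.conjTranspose_apply, Matrix.smul_apply, smul_eq_mul, StarMul.star_mul]
  exact star_central hlam _

omit [StarRing R] in
lemma central_smul_mul (lam : R) (hlam : lam ∈ Set.center R)
    (M N : Matrix (Fin n) (Fin n) R) : M * (lam • N) = lam • (M * N) := by
  ext i j
  simp only [Matrix.mul_apply, Matrix.smul_apply, smul_eq_mul, Finset.mul_sum]
  refine Finset.sum_congr rfl fun k _ => ?_
  rw [← mul_assoc, ← hlam.comm (M i k), mul_assoc]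

end aux

set_option maxHeartbeats 1000000 in
/-- A block upper triangular matrix `A = [[α, β], [0, δ]]` is `λ`-quadratic if and only
if `α ∈ GL_n(R)`, `δ = (α*)⁻¹`, and `α⁻¹ β` is `Λ̄`-Hermitian. -/
theorem stmt_13 (lam : R) (hlam : lam ∈ Set.center R) (hunit : lam * star lam = 1)
    (Λ : AddSubgroup R)
    (hmin : ∀ a : R, a - lam * star a ∈ Λ)
    (hmax : ∀ a ∈ Λ, a = -(lam * star a))
    (hconj : ∀ x : R, ∀ a ∈ Λ, star x * a * x ∈ Λ)
    (n : ℕ) (α β δ : Matrix (Fin n) (Fin n) R) :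
    IsLamQuadratic lam Λ (Matrix.fromBlocks α β 0 δ) ↔
      IsUnit α ∧ δ = Ring.inverse αᴴ ∧
        IsBarLamHermitian lam Λ (Ring.inverse α * β) := by
  -- the ψ-relation, computed blockwise
  have hpsi : (Matrix.fromBlocks α β 0 δ)ᴴ * psiForm lam n * (Matrix.fromBlocks α β 0 δ)
        = psiForm lam n ↔
      (αᴴ * δ = 1 ∧ lam • (δᴴ * α) = lam • (1 : Matrix (Fin n) (Fin n) R) ∧
        lam • (δᴴ * β) + βᴴ * δ = 0) := by
    unfold psiForm
    rw [Matrix.fromBlocks_conjTranspose, Matrix.fromBlocks_multiply,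
      Matrix.fromBlocks_multiply]
    simp only [Matrix.conjTranspose_zero, Matrix.mul_zero, Matrix.zero_mul,
      Matrix.mul_one, Matrix.one_mul, zero_add, add_zero, smul_zero,
      central_smul_mul lam hlam, Matrix.smul_mul, mul_one]
    rw [Matrix.fromBlocks_inj]
    exact ⟨fun h => ⟨h.2.1, h.2.2.1, h.2.2.2⟩, fun h => ⟨rfl, h.1, h.2.1, h.2.2⟩⟩
  unfold IsLamQuadratic
  rw [hpsi]
  constructor
  · rintro ⟨hAunit, ⟨h1, h2, h3⟩, hd1, hd2⟩
    -- get blocks of the inverse of A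
    obtain ⟨u, hu⟩ := hAunit
    set B := (u⁻¹).val with hB
    have hAB : Matrix.fromBlocks α β 0 δ * B = 1 := by
      rw [hB, ← hu]; exact u.mul_inv
    have hBA : B * Matrix.fromBlocks α β 0 δ = 1 := by
      rw [hB, ← hu]; exact u.inv_mul
    rw [show B = Matrix.fromBlocks B.toBlocks₁₁ B.toBlocks₁₂ B.toBlocks₂₁ B.toBlocks₂₂
        from (Matrix.fromBlocks_toBlocks B).symm,
      ← Matrix.fromBlocks_one, Matrix.fromBlocks_multiply, Matrix.fromBlocks_inj]
        at hAB hBA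
    obtain ⟨hab11, hab12, hab21, hab22⟩ := hAB
    obtain ⟨hba11, hba12, hba21, hba22⟩ := hBA
    -- δ is a unit with two-sided inverse αᴴ
    have hdright : δ * B.toBlocks₂₂ = 1 := by simpa using hab22
    have hB22 : B.toBlocks₂₂ = αᴴ := by
      calc B.toBlocks₂₂ = (αᴴ * δ) * B.toBlocks₂₂ := by rw [h1, one_mul]
        _ = αᴴ * (δ * B.toBlocks₂₂) := by rw [mul_assoc]
        _ = αᴴ := by rw [hdright, mul_one]
    have hda : δ * αᴴ = 1 := by rw [← hB22]; exact hdright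
    -- α is a unit
    have hl : δᴴ * α = 1 := by
      have := congrArg Matrix.conjTranspose h1
      simpa [Matrix.conjTranspose_mul] using this
    have hr : α * δᴴ = 1 := by
      have := congrArg Matrix.conjTranspose hda
      simpa [Matrix.conjTranspose_mul] using this
    have hαunit : IsUnit α := isUnit_iff_exists.mpr ⟨δᴴ, hr, hl⟩
    set x := Ring.inverse α with hx
    have hax : α * x = 1 := Ring.mul_inverse_cancel α hαunit
    have hxa : x * α = 1 := Ring.inverse_mul_cancel α hαunit
    have haxH : αᴴ * xᴴ = 1 := by
      have := congrArg Matrix.conjTranspose hxa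
      simpa [Matrix.conjTranspose_mul] using this
    have hxaH : xᴴ * αᴴ = 1 := by
      have := congrArg Matrix.conjTranspose hax
      simpa [Matrix.conjTranspose_mul] using this
    -- δ = (αᴴ)⁻¹ = xᴴ
    have hδ : δ = xᴴ := by
      calc δ = 1 * δ := (one_mul δ).symm
        _ = (xᴴ * αᴴ) * δ := by rw [hxaH]
        _ = xᴴ * (αᴴ * δ) := mul_assoc _ _ _
        _ = xᴴ := by rw [h1, mul_one]
    have hαHunit : IsUnit αᴴ := isUnit_iff_exists.mpr ⟨xᴴ, haxH, hxaH⟩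
    have hδinv : δ = Ring.inverse αᴴ := by
      calc δ = (Ring.inverse αᴴ * αᴴ) * δ := by
              rw [Ring.inverse_mul_cancel αᴴ hαHunit, one_mul]
        _ = Ring.inverse αᴴ * (αᴴ * δ) := mul_assoc _ _ _
        _ = Ring.inverse αᴴ := by rw [h1, mul_one]
    -- the Hermitian condition
    set γ := x * β with hγ
    have hδH : δᴴ = x := by rw [hδ, Matrix.conjTranspose_conjTranspose]
    have hγH : βᴴ * δ = γᴴ := by rw [hδ, hγ, ← Matrix.conjTranspose_mul]
    have h3' : lam • γ + γᴴ = 0 := by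
      rw [← hγH, hγ, ← hδH]; exact h3
    refine ⟨hαunit, hδinv, ?_, ?_⟩
    · -- γ = -(star lam • γᴴ)
      have hneg : γᴴ = -(lam • γ) := by linear_combination (norm := abel) h3'
      calc γ = (γᴴ)ᴴ := (Matrix.conjTranspose_conjTranspose γ).symm
        _ = (-(lam • γ))ᴴ := by rw [hneg]
        _ = -(star lam • γᴴ) := by
            rw [Matrix.conjTranspose_neg, smul_conjTranspose_central lam hlam]
    · -- diagonal condition
      intro i
      have hd2' := hd2 i
      rw [Matrix.toBlocks_fromBlocks₁₂, Matrix.toBlocks_fromBlocks₂₂, hγH] at hd2'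
      exact ⟨γᴴ i i, hd2', by simp [Matrix.conjTranspose_apply]⟩
  · rintro ⟨hαunit, hδinv, hherm1, hherm2⟩
    set x := Ring.inverse α with hx
    have hax : α * x = 1 := Ring.mul_inverse_cancel α hαunit
    have hxa : x * α = 1 := Ring.inverse_mul_cancel α hαunit
    have haxH : αᴴ * xᴴ = 1 := by
      have := congrArg Matrix.conjTranspose hxa
      simpa [Matrix.conjTranspose_mul] using this
    have hxaH : xᴴ * αᴴ = 1 := by
      have := congrArg Matrix.conjTranspose hax
      simpa [Matrix.conjTranspose_mul] using this
    have hαHunit : IsUnit αᴴ := isUnit_iff_exists.mpr ⟨xᴴ, haxH, hxaH⟩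
    have hδ : δ = xᴴ := by
      rw [hδinv]
      calc Ring.inverse αᴴ = Ring.inverse αᴴ * (αᴴ * xᴴ) := by rw [haxH, mul_one]
        _ = (Ring.inverse αᴴ * αᴴ) * xᴴ := (mul_assoc _ _ _).symm
        _ = xᴴ := by rw [Ring.inverse_mul_cancel αᴴ hαHunit, one_mul]
    set γ := x * β with hγ
    have hδH : δᴴ = x := by rw [hδ, Matrix.conjTranspose_conjTranspose]
    have hγH : βᴴ * δ = γᴴ := by rw [hδ, hγ, ← Matrix.conjTranspose_mul]
    have hdleft : αᴴ * δ = 1 := by rw [hδ]; exact haxH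
    have hda : δ * αᴴ = 1 := by rw [hδ]; exact hxaH
    -- A is a unit
    have hAunit : IsUnit (Matrix.fromBlocks α β 0 δ) := by
      refine isUnit_iff_exists.mpr ⟨Matrix.fromBlocks x (-(x * β * αᴴ)) 0 αᴴ, ?_, ?_⟩
      · rw [Matrix.fromBlocks_multiply, ← Matrix.fromBlocks_one, Matrix.fromBlocks_inj]
        refine ⟨by simp [hax], ?_, by simp, by simp [hda]⟩
        rw [Matrix.mul_neg, ← mul_assoc, ← mul_assoc, hax, one_mul]
        simp
      · rw [Matrix.fromBlocks_multiply, ← Matrix.fromBlocks_one, Matrix.fromBlocks_inj]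
        refine ⟨by simp [hxa], ?_, by simp, by simp [hdleft]⟩
        rw [Matrix.neg_mul, hδ, mul_assoc (x * β) αᴴ xᴴ, haxH, mul_one]
        simp
    refine ⟨hAunit, ⟨hdleft, by rw [hδH, hxa], ?_⟩, ?_, ?_⟩
    · rw [hδH, ← hγ, hγH]
      have : lam • γ = -γᴴ := by
        calc lam • γ = lam • (-(star lam • γᴴ)) := by rw [← hherm1]
          _ = -γᴴ := by rw [smul_neg, smul_smul, hunit, one_smul]
      rw [this]; simp
    · intro i
      rw [Matrix.toBlocks_fromBlocks₁₁, Matrix.toBlocks_fromBlocks₂₁]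
      simpa using Λ.zero_mem
    · intro i
      rw [Matrix.toBlocks_fromBlocks₁₂, Matrix.toBlocks_fromBlocks₂₂, hγH]
      obtain ⟨a, ha, hai⟩ := hherm2 i
      have : γᴴ i i = a := by
        simp only [Matrix.conjTranspose_apply, ← hai, star_star]
      rwa [this]
end

section
/- Let (R, Λ, λ) be a form ring. If A = [[α, β],[0, δ]] is a λ-quadratic matrix with α invertible, then A · T₁₂(−α^{-1}β) = H(α), where T₁₂(μ) = [[I_n, μ],[0, I_n]] and H(α) = [[α, 0],[0, (α*)^{-1}]]. Consequently A is congruent to the hyperbolic matrix H(α) modulo the Λ-elementary quadratic group EQ^λ(2n, R, Λ). -/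
open Matrix

variable {R : Type*} [Ring R] [StarRing R]

/-- The hyperbolic matrix `H(α) = [[α, 0], [0, (α*)⁻¹]]`. -/
noncomputable def hypMat {n : ℕ} (a : Matrix (Fin n) (Fin n) R) :
    Matrix (Fin n ⊕ Fin n) (Fin n ⊕ Fin n) R :=
  Matrix.fromBlocks a 0 0 (Ring.inverse aᴴ)

/-- `T₁₂(β) = [[I, β], [0, I]]`. -/
def T12 {n : ℕ} (β : Matrix (Fin n) (Fin n) R) :
    Matrix (Fin n ⊕ Fin n) (Fin n ⊕ Fin n) R :=
  Matrix.fromBlocks 1 β 0 1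

/-- `T₂₁(γ) = [[I, 0], [γ, I]]`. -/
def T21 {n : ℕ} (γ : Matrix (Fin n) (Fin n) R) :
    Matrix (Fin n ⊕ Fin n) (Fin n ⊕ Fin n) R :=
  Matrix.fromBlocks 1 0 γ 1

/-- The elementary group `E_n(R)`, generated by elementary transvections
`I + c·e_{ij}`, `i ≠ j` (as a multiplicative submonoid, which is a group since the
generating set is closed under inverses). -/
def elemGroup (R : Type*) [Ring R] (n : ℕ) : Submonoid (Matrix (Fin n) (Fin n) R) :=
  Submonoid.closure {T | ∃ i j : Fin n, ∃ c : R, i ≠ j ∧ T = 1 + Matrix.single i j c}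

/-- The `Λ`-elementary quadratic group `EQ^λ(2n, R, Λ)`, generated by the hyperbolic
matrices `H(ε)` for `ε ∈ E_n(R)`, the matrices `T₁₂(β)` for `Λ̄`-Hermitian `β`, and the
matrices `T₂₁(γ)` for `Λ`-Hermitian `γ` (as a multiplicative submonoid, which is a
group since the generating set is closed under inverses). -/
noncomputable def EQLam (lam : R) (Λ : AddSubgroup R) (n : ℕ) :
    Submonoid (Matrix (Fin n ⊕ Fin n) (Fin n ⊕ Fin n) R) :=
  Submonoid.closure
    {M | (∃ ε ∈ elemGroup R n, M = hypMat ε) ∨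
      (∃ β, IsBarLamHermitian lam Λ β ∧ M = T12 β) ∨
      (∃ γ, IsLamHermitian lam Λ γ ∧ M = T21 γ)}

/-- If `A = [[α, β], [0, δ]]` is a `λ`-quadratic matrix with `α` invertible, then
`A · T₁₂(−α⁻¹β) = H(α)`; consequently `A` is congruent to the hyperbolic matrix `H(α)`
modulo the `Λ`-elementary quadratic group `EQ^λ(2n, R, Λ)`. -/
theorem stmt_14 (lam : R) (hlam : lam ∈ Set.center R) (hunit : lam * star lam = 1)
    (Λ : AddSubgroup R)
    (hmin : ∀ a : R, a - lam * star a ∈ Λ)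
    (hmax : ∀ a ∈ Λ, a = -(lam * star a))
    (hconj : ∀ x : R, ∀ a ∈ Λ, star x * a * x ∈ Λ)
    (n : ℕ) (α β δ : Matrix (Fin n) (Fin n) R)
    (hq : IsLamQuadratic lam Λ (Matrix.fromBlocks α β 0 δ))
    (hα : IsUnit α) :
    Matrix.fromBlocks α β 0 δ * T12 (-(Ring.inverse α * β)) = hypMat α ∧
    ∃ e ∈ EQLam lam Λ n, Matrix.fromBlocks α β 0 δ = hypMat α * e := by
  obtain ⟨-, hpsi, -, hd⟩ := hq
  have hαH : IsUnit (αᴴ) := hα.star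
  simp only [psiForm, fromBlocks_conjTranspose, fromBlocks_multiply, conjTranspose_zero,
    Matrix.mul_zero, Matrix.zero_mul, Matrix.mul_one, Matrix.one_mul, add_zero, zero_add,
    Matrix.mul_smul, Matrix.smul_mul] at hpsi
  rw [fromBlocks_inj] at hpsi
  obtain ⟨-, h12, -, h22⟩ := hpsi
  have hδ : δ = Ring.inverse αᴴ := by
    calc δ = (Ring.inverse αᴴ * αᴴ) * δ := by rw [Ring.inverse_mul_cancel _ hαH, Matrix.one_mul]
    _ = Ring.inverse αᴴ * (αᴴ * δ) := by rw [Matrix.mul_assoc]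
    _ = Ring.inverse αᴴ := by rw [h12, Matrix.mul_one]
  set μ : Matrix (Fin n) (Fin n) R := Ring.inverse α * β with hμ
  have hinvH : (Ring.inverse α)ᴴ = Ring.inverse αᴴ := by
    have h1 : (Ring.inverse α)ᴴ * αᴴ = 1 := by
      rw [← Matrix.conjTranspose_mul, Ring.mul_inverse_cancel _ hα, conjTranspose_one]
    calc (Ring.inverse α)ᴴ = (Ring.inverse α)ᴴ * (αᴴ * Ring.inverse αᴴ) := by
          rw [Ring.mul_inverse_cancel _ hαH, Matrix.mul_one]
    _ = ((Ring.inverse α)ᴴ * αᴴ) * Ring.inverse αᴴ := by rw [Matrix.mul_assoc]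
    _ = Ring.inverse αᴴ := by rw [h1, Matrix.one_mul]
  have hδH : δᴴ = Ring.inverse α := by
    rw [hδ, ← hinvH, conjTranspose_conjTranspose]
  have hμH : μᴴ = βᴴ * δ := by rw [hμ, Matrix.conjTranspose_mul, hinvH, hδ]
  have hfirst : Matrix.fromBlocks α β 0 δ * T12 (-μ) = hypMat α := by
    rw [T12, hypMat, fromBlocks_multiply, ← hδ, fromBlocks_inj]
    refine ⟨by simp, ?_, by simp, by simp⟩
    rw [Matrix.mul_one, Matrix.mul_neg, hμ, ← Matrix.mul_assoc,
      Ring.mul_inverse_cancel _ hα, Matrix.one_mul, neg_add_cancel]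
  have hlamc : star lam * lam = 1 := by
    rw [← (Set.mem_center_iff.mp hlam).comm (star lam), hunit]
  have hrel : lam • μ + μᴴ = 0 := by
    have hscal : δᴴ * (lam • 1) = lam • δᴴ := by
      ext i j
      simp only [Matrix.mul_apply, Matrix.smul_apply, Matrix.one_apply, mul_ite, mul_one,
        mul_zero, smul_ite, smul_eq_mul, Finset.sum_ite_eq', Finset.mem_univ, if_true]
      exact ((Set.mem_center_iff.mp hlam).comm _).symm
    have h22' : lam • (δᴴ * β) + βᴴ * δ = 0 := by
      rw [← h22, hscal, Matrix.smul_mul]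
    rw [hμH, hμ, ← hδH]
    exact h22' 
  refine ⟨hfirst, T12 μ, ?_, ?_⟩
  · refine Submonoid.subset_closure (Or.inr (Or.inl ⟨μ, ⟨?_, ?_⟩, rfl⟩))
    · have : lam • μ = -μᴴ := by rwa [add_eq_zero_iff_eq_neg] at hrel
      calc μ = (star lam * lam) • μ := by rw [hlamc, one_smul]
      _ = star lam • (lam • μ) := by rw [mul_smul]
      _ = -(star lam • μᴴ) := by rw [this, smul_neg]
    · intro i
      have h := hd i
      simp only [toBlocks_fromBlocks₁₂, toBlocks_fromBlocks₂₂] at h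
      rw [← hμH] at h
      exact ⟨μᴴ i i, h, by rw [conjTranspose_apply, star_star]⟩
  · have hT : T12 (-μ) * T12 μ = 1 := by
      rw [T12, T12, fromBlocks_multiply]
      simp [← fromBlocks_one]
    calc Matrix.fromBlocks α β 0 δ
        = Matrix.fromBlocks α β 0 δ * (T12 (-μ) * T12 μ) := by rw [hT, Matrix.mul_one]
    _ = hypMat α * T12 μ := by rw [← Matrix.mul_assoc, hfirst]
end

section
/- Let (R, Λ, λ) be a form ring and α = [[a, b],[c, d]] a λ-quadratic 2n×2n matrix with a ∈ GL_n(R). Then α is congruent to the hyperbolic matrix H(a) = [[a, 0],[0, (a*)^{-1}]] modulo EQ^λ(2n, R, Λ): specifically α T₁₂(−a^{-1}b) is block lower triangular with diagonal blocks a and (a*)^{-1}, and hence α ≡ H(a) mod EQ^λ(2n, R, Λ). -/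
open Matrix

variable {R : Type*} [Ring R] [StarRing R]

section Aux

variable {lam : R}

private lemma central_comm (h : lam ∈ Set.center R) (r : R) : lam * r = r * lam :=
  (Set.mem_center_iff.mp h).comm r

private lemma mul_smul_one_central (h : lam ∈ Set.center R) {n : ℕ}
    (M : Matrix (Fin n) (Fin n) R) : M * (lam • 1) = lam • M := by
  ext i j
  simp only [Matrix.mul_apply, Matrix.smul_apply, Matrix.one_apply, smul_eq_mul,
    mul_ite, mul_one, mul_zero, Finset.sum_ite_eq', Finset.mem_univ, if_true]
  rw [central_comm h]

private lemma mul_smul_central (h : lam ∈ Set.center R) {n : ℕ}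
    (M N : Matrix (Fin n) (Fin n) R) : M * (lam • N) = lam • (M * N) := by
  ext i j
  simp only [Matrix.mul_apply, Matrix.smul_apply, smul_eq_mul, Finset.mul_sum]
  refine Finset.sum_congr rfl fun k _ => ?_
  rw [← mul_assoc, ← central_comm h, mul_assoc]

private lemma sum_conj_mem (Λ : AddSubgroup R) (hlam : lam ∈ Set.center R)
    (hmin : ∀ a : R, a - lam * star a ∈ Λ)
    (hconj : ∀ x : R, ∀ a ∈ Λ, star x * a * x ∈ Λ)
    {n : ℕ} (A : Matrix (Fin n) (Fin n) R)
    (hA : ∀ k l, A l k = -(lam * star (A k l)))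
    (hdiag : ∀ i, A i i ∈ Λ) (v : Fin n → R) :
    ∑ k, ∑ l, star (v k) * A k l * v l ∈ Λ := by
  have main : ∀ s : Finset (Fin n),
      (∑ k ∈ s, ∑ l ∈ s, star (v k) * A k l * v l) ∈ Λ := by
    intro s
    induction s using Finset.induction_on with
    | empty => simpa using Λ.zero_mem
    | @insert j s hj ih =>
      have hpair : ∀ k, star (v j) * A j k * v k + star (v k) * A k j * v j ∈ Λ := by
        intro k
        have hAkj := hA j k
        have : star (v j) * A j k * v k + star (v k) * A k j * v j =
            star (v j) * A j k * v k -
              lam * star (star (v j) * A j k * v k) := by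
          rw [hAkj, StarMul.star_mul, StarMul.star_mul, star_star, mul_neg, neg_mul, sub_eq_add_neg]
          congr 1
          rw [neg_inj]
          simp only [mul_assoc]
          rw [← mul_assoc, ← central_comm hlam (star (v k)), mul_assoc]
        rw [this]
        exact hmin _
      rw [Finset.sum_insert hj, Finset.sum_insert hj,
        Finset.sum_congr rfl (fun k (_ : k ∈ s) => Finset.sum_insert hj),
        Finset.sum_add_distrib]
      have hrearr :
          star (v j) * A j j * v j + ∑ l ∈ s, star (v j) * A j l * v l +
            ((∑ k ∈ s, star (v k) * A k j * v j) +
              ∑ k ∈ s, ∑ l ∈ s, star (v k) * A k l * v l) =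
          star (v j) * A j j * v j +
            (∑ k ∈ s, (star (v j) * A j k * v k + star (v k) * A k j * v j)) +
            ∑ k ∈ s, ∑ l ∈ s, star (v k) * A k l * v l := by
        rw [Finset.sum_add_distrib]; abel
      rw [hrearr]
      exact Λ.add_mem (Λ.add_mem (hconj _ _ (hdiag j))
        (AddSubgroup.sum_mem Λ fun k _ => hpair k)) ih
  simpa using main Finset.univ

private lemma diag_conj_mem (Λ : AddSubgroup R) (hlam : lam ∈ Set.center R)
    (hmin : ∀ a : R, a - lam * star a ∈ Λ)
    (hconj : ∀ x : R, ∀ a ∈ Λ, star x * a * x ∈ Λ)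
    {n : ℕ} (A N : Matrix (Fin n) (Fin n) R)
    (hA : A = -(lam • Aᴴ)) (hdiag : ∀ i, A i i ∈ Λ) (i : Fin n) :
    (Nᴴ * A * N) i i ∈ Λ := by
  have hA' : ∀ k l, A l k = -(lam * star (A k l)) := by
    intro k l
    conv_lhs => rw [hA]
    simp [Matrix.conjTranspose_apply]
  have e1 : (Nᴴ * A * N) i i = ∑ l, ∑ k, star (N k i) * A k l * N l i := by
    simp only [Matrix.mul_apply, Matrix.conjTranspose_apply, Finset.sum_mul]
  rw [e1, Finset.sum_comm]
  exact sum_conj_mem Λ hlam hmin hconj A hA' hdiag fun k => N k i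

end Aux

/-- Let `α = [[a, b], [c, d]]` be a `λ`-quadratic `2n × 2n` matrix with `a ∈ GL_n(R)`.
Then `α · T₁₂(−a⁻¹ b)` is block lower triangular with diagonal blocks `a` and `(a*)⁻¹`,
and hence `α` is congruent to the hyperbolic matrix `H(a)` modulo `EQ^λ(2n, R, Λ)`. -/
theorem stmt_15 (lam : R) (hlam : lam ∈ Set.center R) (hunit : lam * star lam = 1)
    (Λ : AddSubgroup R)
    (hmin : ∀ a : R, a - lam * star a ∈ Λ)
    (hmax : ∀ a ∈ Λ, a = -(lam * star a))
    (hconj : ∀ x : R, ∀ a ∈ Λ, star x * a * x ∈ Λ)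
    (n : ℕ) (a b c d : Matrix (Fin n) (Fin n) R)
    (hq : IsLamQuadratic lam Λ (Matrix.fromBlocks a b c d))
    (ha : IsUnit a) :
    (Matrix.fromBlocks a b c d * T12 (-(Ring.inverse a * b))).toBlocks₁₂ = 0 ∧
    (Matrix.fromBlocks a b c d * T12 (-(Ring.inverse a * b))).toBlocks₁₁ = a ∧
    (Matrix.fromBlocks a b c d * T12 (-(Ring.inverse a * b))).toBlocks₂₂ =
      Ring.inverse aᴴ ∧
    ∃ e ∈ EQLam lam Λ n, Matrix.fromBlocks a b c d = hypMat a * e := by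
  obtain ⟨hu, hψ0, hd1, hd2⟩ := hq
  simp only [Matrix.toBlocks_fromBlocks₁₁, Matrix.toBlocks_fromBlocks₂₁,
    Matrix.toBlocks_fromBlocks₁₂, Matrix.toBlocks_fromBlocks₂₂] at hd1 hd2
  have hcc : star lam ∈ Set.center R := Set.star_mem_center hlam
  have hunit' : star lam * lam = 1 := by rw [← central_comm hlam]; exact hunit
  -- inverses
  have hai1 : a * Ring.inverse a = 1 := Ring.mul_inverse_cancel a ha
  have hai2 : Ring.inverse a * a = 1 := Ring.inverse_mul_cancel a ha
  have haH : IsUnit aᴴ := by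
    rw [← Matrix.star_eq_conjTranspose]; exact ha.star
  have hx1 : aᴴ * Ring.inverse aᴴ = 1 := Ring.mul_inverse_cancel _ haH
  have hx2 : Ring.inverse aᴴ * aᴴ = 1 := Ring.inverse_mul_cancel _ haH
  have hxai : (Ring.inverse a)ᴴ = Ring.inverse aᴴ := by
    rw [← Matrix.star_eq_conjTranspose, ← Matrix.star_eq_conjTranspose, ← Ring.inverse_star]
  set ai := Ring.inverse a with hai
  set x := Ring.inverse aᴴ with hxdef
  -- block relations from αᴴ ψ α = ψ
  have hψ := hψ0
  unfold psiForm at hψ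
  rw [Matrix.fromBlocks_conjTranspose, Matrix.fromBlocks_multiply,
    Matrix.fromBlocks_multiply] at hψ
  simp only [Matrix.mul_zero, Matrix.mul_one, mul_zero, mul_one, zero_add, add_zero,
    mul_smul_one_central hlam, Matrix.smul_mul] at hψ
  rw [Matrix.fromBlocks_inj] at hψ
  obtain ⟨e11, e12, _, _⟩ := hψ
  -- e11 : lam • (cᴴ * a) + aᴴ * c = 0,  e12 : lam • (cᴴ * b) + aᴴ * d = 1
  have R1 : aᴴ * c = -(lam • (cᴴ * a)) := eq_neg_of_add_eq_zero_right e11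
  have R1' : aᴴ * c = -(lam • (aᴴ * c)ᴴ) := by
    rw [Matrix.conjTranspose_mul, Matrix.conjTranspose_conjTranspose]
    exact R1
  -- the inverse relation α ψ⁻¹ αᴴ = ψ⁻¹, giving b * aᴴ = -(λ̄ • (a * bᴴ))
  set ψ' : Matrix (Fin n ⊕ Fin n) (Fin n ⊕ Fin n) R :=
    Matrix.fromBlocks 0 (star lam • 1) 1 0 with hψ'def
  have h1 : psiForm lam n * ψ' = 1 := by
    rw [hψ'def]
    unfold psiForm
    rw [Matrix.fromBlocks_multiply]
    simp only [Matrix.mul_zero, Matrix.mul_one, mul_zero, mul_one, zero_add, add_zero, zero_mul, one_mul, Matrix.zero_mul,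
      Matrix.smul_mul, smul_zero,
      mul_smul_one_central hcc, smul_smul, hunit', one_smul]
    exact Matrix.fromBlocks_one
  have h2 : ψ' * psiForm lam n = 1 := by
    rw [hψ'def]
    unfold psiForm
    rw [Matrix.fromBlocks_multiply]
    simp only [Matrix.mul_zero, Matrix.mul_one, mul_zero, mul_one, zero_add, add_zero, zero_mul, one_mul, Matrix.zero_mul,
      Matrix.smul_mul, smul_zero,
      mul_smul_one_central hlam, smul_smul, hunit, one_smul]
    exact Matrix.fromBlocks_one
  set α : Matrix (Fin n ⊕ Fin n) (Fin n ⊕ Fin n) R := Matrix.fromBlocks a b c d with hαdef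
  have hleft : ψ' * αᴴ * psiForm lam n * α = 1 := by
    rw [mul_assoc ψ' αᴴ, mul_assoc ψ', hψ0, h2]
  have hright : α * (ψ' * αᴴ * psiForm lam n) = 1 := by
    obtain ⟨u, huu⟩ := hu
    have h3 : ψ' * αᴴ * psiForm lam n * u.val = 1 := by rw [huu]; exact hleft
    have h4 : ψ' * αᴴ * psiForm lam n = u⁻¹.val := by
      calc ψ' * αᴴ * psiForm lam n
          = ψ' * αᴴ * psiForm lam n * (u.val * u⁻¹.val) := by rw [u.mul_inv, mul_one]
        _ = ψ' * αᴴ * psiForm lam n * u.val * u⁻¹.val := by simp only [mul_assoc]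
        _ = u⁻¹.val := by rw [h3, one_mul]
    rw [h4, ← huu, u.mul_inv]
  have hS : α * ψ' * αᴴ = ψ' := by
    calc α * ψ' * αᴴ = α * ψ' * αᴴ * (psiForm lam n * ψ') := by rw [h1, mul_one]
      _ = α * (ψ' * αᴴ * psiForm lam n) * ψ' := by simp only [mul_assoc]
      _ = 1 * ψ' := by rw [hright]
      _ = ψ' := one_mul _
  rw [hαdef, hψ'def, Matrix.fromBlocks_conjTranspose, Matrix.fromBlocks_multiply,
    Matrix.fromBlocks_multiply] at hS
  simp only [Matrix.mul_zero, Matrix.mul_one, mul_zero, mul_one, zero_add, add_zero,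
    mul_smul_one_central hcc, Matrix.smul_mul] at hS
  rw [Matrix.fromBlocks_inj] at hS
  have S1 : b * aᴴ = -(star lam • (a * bᴴ)) := eq_neg_of_add_eq_zero_left hS.1
  -- the lower-triangular form
  set y := ai * b with hydef
  have hyH : yᴴ = bᴴ * x := by
    rw [hydef, Matrix.conjTranspose_mul, hxai]
  have hblock22 : c * -(ai * b) + d = x := by
    have hkey : aᴴ * (c * -(ai * b) + d) = 1 := by
      have h5 : aᴴ * (c * -(ai * b)) = lam • (cᴴ * b) := by
        rw [← mul_assoc, R1]
        calc -(lam • (cᴴ * a)) * -(ai * b)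
            = lam • (cᴴ * a * (ai * b)) := by
              rw [neg_mul, mul_neg, neg_neg, Matrix.smul_mul]
          _ = lam • (cᴴ * b) := by rw [mul_assoc cᴴ, ← mul_assoc a, hai1, one_mul]
      rw [mul_add, h5, e12]
    calc c * -(ai * b) + d = x * (aᴴ * (c * -(ai * b) + d)) := by
          rw [← mul_assoc, hx2, one_mul]
      _ = x := by rw [hkey, mul_one]
  -- hermitian property of y
  have h7 : ai * (b * aᴴ) * x = y := by
    rw [mul_assoc, mul_assoc b, hx1, mul_one]
  have hyherm : y = -(star lam • yᴴ) := by
    rw [hyH, ← h7, S1, mul_neg, neg_mul, mul_smul_central hcc, Matrix.smul_mul,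
      ← mul_assoc ai a, hai2, one_mul]
  -- diagonal entries of yᴴ = bᴴ x lie in Λ
  have hU : ∀ i, (bᴴ * x) i i ∈ Λ := by
    intro i
    have hid : bᴴ * x = bᴴ * d - yᴴ * (aᴴ * c) * y := by
      have h6 : yᴴ * (aᴴ * c) * y = bᴴ * (c * y) := by
        rw [hyH, mul_assoc (bᴴ * x), mul_assoc bᴴ x, ← mul_assoc x (aᴴ * c) y,
          ← mul_assoc x aᴴ c, hx2, one_mul]
      rw [h6, ← mul_sub]
      congr 1
      rw [← hblock22, mul_neg, hydef]
      abel
    rw [hid, Matrix.sub_apply]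
    exact Λ.sub_mem (hd2 i) (diag_conj_mem Λ hlam hmin hconj (aᴴ * c) y R1' hd1 i)
  -- the four goals
  refine ⟨?_, ?_, ?_, ?_⟩
  · rw [T12, Matrix.fromBlocks_multiply]
    simp only [Matrix.toBlocks_fromBlocks₁₂, Matrix.mul_one, Matrix.mul_zero, add_zero,
      mul_one, mul_zero]
    rw [mul_neg, ← mul_assoc, hai1, one_mul, neg_add_cancel]
  · rw [T12, Matrix.fromBlocks_multiply]
    simp [Matrix.toBlocks_fromBlocks₁₁]
  · rw [T12, Matrix.fromBlocks_multiply]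
    simp only [Matrix.toBlocks_fromBlocks₂₂, Matrix.mul_one, Matrix.mul_zero, zero_add,
      mul_one, mul_zero]
    exact hblock22
  · refine ⟨T21 (aᴴ * c) * T12 y, ?_, ?_⟩
    · refine Submonoid.mul_mem _ (Submonoid.subset_closure ?_) (Submonoid.subset_closure ?_)
      · refine Or.inr (Or.inr ⟨aᴴ * c, ⟨?_, hd1⟩, rfl⟩)
        rw [Matrix.conjTranspose_mul, Matrix.conjTranspose_conjTranspose]
        exact R1
      · refine Or.inr (Or.inl ⟨y, ⟨hyherm, ?_⟩, rfl⟩)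
        intro i
        refine ⟨(bᴴ * x) i i, hU i, ?_⟩
        have : (bᴴ * x) i i = star (y i i) := by
          rw [← hyH, Matrix.conjTranspose_apply]
        rw [this, star_star]
    · rw [hypMat, T21, T12, ← mul_assoc, Matrix.fromBlocks_multiply,
        Matrix.fromBlocks_multiply]
      simp only [Matrix.mul_one, Matrix.mul_zero, Matrix.zero_mul, Matrix.one_mul,
        mul_one, mul_zero, zero_mul, one_mul, add_zero, zero_add]
      rw [Matrix.fromBlocks_inj]
      refine ⟨rfl, ?_, ?_, ?_⟩
      · rw [hydef, ← mul_assoc, hai1, one_mul]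
      · rw [← mul_assoc, hx2, one_mul]
      · rw [← hxdef, ← mul_assoc x aᴴ c, hx2, one_mul, ← hblock22, mul_neg, hydef]
        abel
end

section
/- Let R be an associative ring and k ∈ ℤ with kR = R (i.e., k invertible in R). Let P(X) ∈ R[X] with P(0) central in R, and suppose (1 + X^r P(X))^{k^r} = 1 in R_t = R[X]/(X^{t+1}) for some r ≥ 0. Then (1 + X^r P(X)) = (1 + X^{r+1} Q(X)) in R_t for some Q(X) ∈ R[X] with deg Q < t − r. -/
open Polynomial

/-- Let `R` be an associative ring and `k ∈ ℤ` with `kR = R` (i.e. `k` invertible in `R`).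
Let `P(X) ∈ R[X]` with `P(0)` central in `R`, and suppose `(1 + X^r P(X))^{k^r} = 1` in
`R_t = R[X]/(X^{t+1})` for some `r ≥ 0`. Then `(1 + X^r P(X)) = (1 + X^{r+1} Q(X))` in `R_t`
for some `Q(X) ∈ R[X]` with `deg Q < t - r`. Equality in `R_t` is expressed as congruence
modulo `X^{t+1}` in `R[X]`. -/
theorem stmt_18 {R : Type*} [Ring R] (k : ℤ) (hk : IsUnit (k : R)) (t r : ℕ) (P : R[X])
    (hcentral : P.coeff 0 ∈ Set.center R)
    (htor : ∃ V : R[X], (1 + X ^ r * P) ^ (k.natAbs ^ r) = 1 + X ^ (t + 1) * V) :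
    ∃ Q W : R[X], Q.degree < ((t - r : ℕ) : WithBot ℕ) ∧
      1 + X ^ r * P = 1 + X ^ (r + 1) * Q + X ^ (t + 1) * W := by
  obtain ⟨V, hV⟩ := htor
  rcases subsingleton_or_nontrivial R with hs | hs
  · exact ⟨0, 0, by rw [Polynomial.degree_zero]; exact WithBot.bot_lt_coe _,
      Subsingleton.elim _ _⟩
  rcases lt_or_ge t r with htr | hrt
  · refine ⟨0, X ^ (r - t - 1) * P,
      by rw [Polynomial.degree_zero]; exact WithBot.bot_lt_coe _, ?_⟩
    rw [mul_zero, add_zero, ← mul_assoc, ← pow_add,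
      show t + 1 + (r - t - 1) = r from by omega]
  -- now r ≤ t and R nontrivial
  have hk0 : k ≠ 0 := by
    rintro rfl
    rw [Int.cast_zero, isUnit_zero_iff] at hk
    exact zero_ne_one hk
  have hP0 : P.coeff 0 = 0 := by
    rcases Nat.eq_zero_or_pos r with hr0 | hr
    · subst hr0
      simp only [pow_zero, pow_one, X_pow_mul] at hV
      have := congrArg (fun p => p.coeff 0) hV
      simpa using this
    · set n := k.natAbs ^ r with hn
      have hn1 : 1 ≤ n := Nat.one_le_iff_ne_zero.mpr
        (pow_ne_zero _ (Int.natAbs_ne_zero.mpr hk0))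
      have hXPr : (X ^ r * P).coeff r = P.coeff 0 := by
        simpa using Polynomial.coeff_X_pow_mul P r 0
      have hL : (((1 + X ^ r * P) ^ n).coeff r) = (n : R) * P.coeff 0 := by
        rw [(Commute.one_left (X ^ r * P)).add_pow, Polynomial.finset_sum_coeff]
        rw [Finset.sum_eq_single (n - 1)]
        · rw [one_pow, one_mul, Nat.sub_sub_self hn1, pow_one,
            Polynomial.coeff_mul_natCast, hXPr, Nat.choose_symm hn1,
            Nat.choose_one_right]
          exact (Nat.cast_commute n (P.coeff 0)).symm.eq
        · intro i hi hine
          rw [one_pow, one_mul, Polynomial.coeff_mul_natCast]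
          rcases Nat.eq_or_lt_of_le (Nat.le_of_lt_succ (Finset.mem_range.mp hi))
            with h | h
          · rw [h, Nat.sub_self, pow_zero, Polynomial.coeff_one, if_neg hr.ne',
              zero_mul]
          · have hj : 2 ≤ n - i := by omega
            rw [((Polynomial.commute_X P).pow_left r).mul_pow, ← pow_mul]
            rw [Polynomial.X_pow_mul, Polynomial.coeff_mul_X_pow']
            rw [if_neg (by nlinarith), zero_mul]
        · intro h
          exact absurd (Finset.mem_range.mpr (by omega)) h
      have hR : ((1 + X ^ (t + 1) * V).coeff r) = 0 := by
        rw [Polynomial.coeff_add, Polynomial.X_pow_mul,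
          Polynomial.coeff_mul_X_pow', if_neg (by omega)]
        simp [Polynomial.coeff_one, hr.ne']
      have heq : (n : R) * P.coeff 0 = 0 := by rw [← hL, hV, hR]
      have hu : IsUnit ((n : R)) := by
        have h1 : IsUnit ((k.natAbs : R)) := by
          rcases Int.natAbs_eq k with h | h
          · rw [h, Int.cast_natCast] at hk; exact hk
          · rw [h, Int.cast_neg, Int.cast_natCast] at hk
            exact (IsUnit.neg_iff _).mp hk
        have : ((n : R)) = ((k.natAbs : R)) ^ r := by rw [hn]; push_cast; ring
        rw [this]; exact h1.pow r
      exact (hu.mul_right_eq_zero).mp heq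
  have hP : P = X * P.divX := by
    conv_lhs => rw [← Polynomial.X_mul_divX_add P]
    rw [hP0, Polynomial.C_0, add_zero]
  set D := P.divX with hDdef
  have hmon : (X ^ (t - r) : R[X]).Monic := Polynomial.monic_X_pow _
  have hD : D %ₘ X ^ (t - r) + X ^ (t - r) * (D /ₘ X ^ (t - r)) = D :=
    Polynomial.modByMonic_add_div D (X ^ (t - r))
  refine ⟨D %ₘ X ^ (t - r), D /ₘ X ^ (t - r), ?_, ?_⟩
  · have := Polynomial.degree_modByMonic_lt D hmon
    simpa [Polynomial.degree_X_pow] using this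
  · have hkey : X ^ r * P = X ^ (r + 1) * (D %ₘ X ^ (t - r))
        + X ^ (t + 1) * (D /ₘ X ^ (t - r)) := by
      conv_lhs => rw [hP, ← mul_assoc, ← pow_succ, ← hD, mul_add, ← mul_assoc,
        ← pow_add, show r + 1 + (t - r) = t + 1 from by omega]
    rw [hkey, add_assoc]
end
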